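/- With notation as in the previous abstraction, suppose additionally that B and J are injective in the combined sense: Bv = 0 and Jv = 0 imply v = 0, for v in a subspace Y ⊆ X. Then v ↦ √(a(v, v)) defines a norm on Y, where a(u,v) = ⟨V B u, B v⟩ + ⟨T u, J v⟩ − ⟨J u, T v⟩ + ν⟨J u, J v⟩ with V elliptic and ν > 0. -/
import Mathlib


open RealInnerProductSpace

theorem nitsche_bilinear_form_norm
    {H L X : Type*}
    [NormedAddCommGroup H] [InnerProductSpace ℝ H]
    [NormedAddCommGroup L] [InnerProductSpace ℝ L]
    [AddCommGroup X] [Module ℝ X]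
    (V : H →L[ℝ] H) (α : ℝ) (hα : 0 < α)
    (hell : ∀ φ : H, α * ‖φ‖ ^ 2 ≤ ⟪V φ, φ⟫)
    (B : X →ₗ[ℝ] H) (J : X →ₗ[ℝ] L) (T : X →ₗ[ℝ] L)
    (ν : ℝ) (hν : 0 < ν)
    (a : X → X → ℝ)
    (ha : ∀ u v : X, a u v =
      ⟪V (B u), B v⟫ + ⟪T u, J v⟫ - ⟪J u, T v⟫ + ν * ⟪J u, J v⟫)
    (Y : Submodule ℝ X)
    (hinj : ∀ v ∈ Y, B v = 0 → J v = 0 → v = 0) :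
    (∀ v ∈ Y, (Real.sqrt (a v v) = 0 ↔ v = 0)) ∧
      (∀ v ∈ Y, ∀ c : ℝ,
        Real.sqrt (a (c • v) (c • v)) = |c| * Real.sqrt (a v v)) ∧
      (∀ v ∈ Y, ∀ w ∈ Y,
        Real.sqrt (a (v + w) (v + w)) ≤ Real.sqrt (a v v) + Real.sqrt (a w w)) := by
  -- diagonal of the form
  have hq : ∀ v : X, a v v = ⟪V (B v), B v⟫ + ν * ‖J v‖ ^ 2 := by
    intro v
    rw [ha, real_inner_self_eq_norm_sq, real_inner_comm (T v) (J v)]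
    ring
  have hVnn : ∀ φ : H, 0 ≤ ⟪V φ, φ⟫ := fun φ =>
    le_trans (by positivity) (hell φ)
  have hq0 : ∀ v : X, 0 ≤ a v v := by
    intro v
    rw [hq]
    have h1 := hVnn (B v)
    have h2 : 0 ≤ ν * ‖J v‖ ^ 2 := by positivity
    linarith
  -- expansion
  have hexp : ∀ v w : X, a (v + w) (v + w) = a v v + a w w + (a v w + a w v) := by
    intro v w
    simp only [ha, map_add, inner_add_left, inner_add_right]
    ring
  have hsmul : ∀ (v : X) (c : ℝ), a (c • v) (c • v) = c ^ 2 * a v v := by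
    intro v c
    simp only [ha, map_smul, inner_smul_left, inner_smul_right, conj_trivial]
    ring
  refine ⟨?_, ?_, ?_⟩
  · intro v hv
    constructor
    · intro h
      have h0 : a v v = 0 := by
        exact le_antisymm (Real.sqrt_eq_zero'.mp h) (hq0 v)
      rw [hq] at h0
      have h1 : 0 ≤ ⟪V (B v), B v⟫ := hVnn (B v)
      have h2 : 0 ≤ ν * ‖J v‖ ^ 2 := by positivity
      have hV0 : ⟪V (B v), B v⟫ = 0 := by linarith
      have hJ0 : ν * ‖J v‖ ^ 2 = 0 := by linarith
      have hB : B v = 0 := by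
        have := hell (B v)
        rw [hV0] at this
        have : ‖B v‖ ^ 2 = 0 := by nlinarith [sq_nonneg ‖B v‖]
        have : ‖B v‖ = 0 := by nlinarith [norm_nonneg (B v)]
        exact norm_eq_zero.mp this
      have hJ : J v = 0 := by
        have : ‖J v‖ ^ 2 = 0 := by
          rcases mul_eq_zero.mp hJ0 with h | h
          · exact absurd h (ne_of_gt hν)
          · exact h
        have : ‖J v‖ = 0 := by nlinarith [norm_nonneg (J v)]
        exact norm_eq_zero.mp this
      exact hinj v hv hB hJ
    · intro h
      subst h
      simp [hq]
  · intro v _ c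
    rw [hsmul, Real.sqrt_mul (sq_nonneg c), Real.sqrt_sq_eq_abs]
  · intro v hv w hw
    -- Cauchy–Schwarz type bound via discriminant
    have key : a v w + a w v ≤ 2 * Real.sqrt (a v v) * Real.sqrt (a w w) := by
      have hquad : ∀ t : ℝ, 0 ≤ a w w * (t * t) + (a v w + a w v) * t + a v v := by
        intro t
        have := hq0 (v + t • w)
        have hh : a (v + t • w) (v + t • w)
            = a w w * (t * t) + (a v w + a w v) * t + a v v := by
          simp only [ha, map_add, map_smul, inner_add_left, inner_add_right,
            inner_smul_left, inner_smul_right, conj_trivial]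
          ring
        linarith [hh ▸ this]
      have hd := discrim_le_zero hquad
      rw [discrim] at hd
      have hsq : (a v w + a w v) ^ 2 ≤ 4 * (a v v * a w w) := by nlinarith
      have h1 : a v w + a w v ≤ |a v w + a w v| := le_abs_self _
      have h2 : |a v w + a w v| = Real.sqrt ((a v w + a w v) ^ 2) := by
        rw [Real.sqrt_sq_eq_abs]
      have h3 : Real.sqrt ((a v w + a w v) ^ 2) ≤ Real.sqrt (4 * (a v v * a w w)) :=
        Real.sqrt_le_sqrt hsq
      have h4 : Real.sqrt (4 * (a v v * a w w))
          = 2 * (Real.sqrt (a v v) * Real.sqrt (a w w)) := by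
        rw [Real.sqrt_mul (by norm_num : (0:ℝ) ≤ 4),
          Real.sqrt_mul (hq0 v), show (4:ℝ) = 2 ^ 2 by norm_num, Real.sqrt_sq (by norm_num)]
      linarith [h1, h2 ▸ h3, h4 ▸ (h2 ▸ h3)]
    have hle : a (v + w) (v + w) ≤ (Real.sqrt (a v v) + Real.sqrt (a w w)) ^ 2 := by
      rw [hexp]
      have e1 : Real.sqrt (a v v) ^ 2 = a v v := Real.sq_sqrt (hq0 v)
      have e2 : Real.sqrt (a w w) ^ 2 = a w w := Real.sq_sqrt (hq0 w)
      nlinarith [key]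
    calc Real.sqrt (a (v + w) (v + w))
        ≤ Real.sqrt ((Real.sqrt (a v v) + Real.sqrt (a w w)) ^ 2) := Real.sqrt_le_sqrt hle
      _ = Real.sqrt (a v v) + Real.sqrt (a w w) :=
          Real.sqrt_sq (by positivity)
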